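/- arXiv:2408.14590 — 2 statements merged into one kernel-verified Lean document; each statement's English description precedes it below -/
import Mathlib

section
/- For a finite metric space (X,d) with at least two points and any t > 0, the derivative of the spread is strictly positive: σ_d'(t) > 0. -/
/-!
Differentiating `1 / ∑ y, exp (-t d(x,y))` term by term gives
`σ'(t) = ∑ₓ (∑_y d(x,y) e^{-t d(x,y)}) / (∑_y e^{-t d(x,y)})²`. Every summand is nonnegative
because distances are, and a pair of distinct points `x ≠ y` makes the summand at `x` positive.
-/

open Finset Real

noncomputable section

namespace Spread

def spread {X : Type*} [Fintype X] (d : X → X → ℝ) (t : ℝ) : ℝ :=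
  ∑ x, 1 / ∑ y, exp (-t * d x y)

section SumExp

variable {ι : Type*} [Fintype ι] (a : ι → ℝ)

theorem hasDerivAt_sum_exp_neg_mul (t : ℝ) :
    HasDerivAt (fun s => ∑ i, exp (-s * a i)) (-∑ i, a i * exp (-t * a i)) t := by
  rw [← sum_neg_distrib]
  refine HasDerivAt.fun_sum fun i _ => ?_
  exact ((hasDerivAt_neg t).mul_const (a i)).exp.congr_deriv (by ring)

theorem sum_exp_neg_mul_pos [Nonempty ι] (t : ℝ) : 0 < ∑ i, exp (-t * a i) :=
  sum_pos (fun _ _ => exp_pos _) univ_nonempty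

end SumExp

variable {X : Type*} [Fintype X] (d : X → X → ℝ)

theorem hasDerivAt_spread [Nonempty X] (t : ℝ) :
    HasDerivAt (spread d)
      (∑ x, (∑ y, d x y * exp (-t * d x y)) / (∑ y, exp (-t * d x y)) ^ 2) t := by
  refine HasDerivAt.fun_sum fun x _ => ?_
  simpa only [one_div, neg_neg] using
    (hasDerivAt_sum_exp_neg_mul (d x) t).fun_inv (sum_exp_neg_mul_pos (d x) t).ne'

theorem deriv_spread_pos (hd : ∀ x y, 0 ≤ d x y) {x₀ y₀ : X} (hpos : 0 < d x₀ y₀) (t : ℝ) :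
    0 < deriv (spread d) t := by
  have : Nonempty X := ⟨x₀⟩
  rw [(hasDerivAt_spread d t).deriv]
  have hnum_nonneg (x : X) : 0 ≤ ∑ y, d x y * exp (-t * d x y) :=
    sum_nonneg fun y _ => mul_nonneg (hd x y) (exp_pos _).le
  have hnum_pos : 0 < ∑ y, d x₀ y * exp (-t * d x₀ y) :=
    sum_pos' (fun y _ => mul_nonneg (hd x₀ y) (exp_pos _).le)
      ⟨y₀, mem_univ _, mul_pos hpos (exp_pos _)⟩
  exact sum_pos' (fun x _ => div_nonneg (hnum_nonneg x) (sq_nonneg _))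
    ⟨x₀, mem_univ _, div_pos hnum_pos (pow_pos (sum_exp_neg_mul_pos _ t) 2)⟩

end Spread

end

theorem spread_deriv_pos_general {X : Type*} [MetricSpace X] [Fintype X]
    (hcard : 2 ≤ Fintype.card X) (t : ℝ) :
    0 < deriv (fun t : ℝ => ∑ x : X, 1 / ∑ y : X, Real.exp (-t * dist x y)) t := by
  obtain ⟨x, y, hxy⟩ := Fintype.exists_pair_of_one_lt_card hcard
  exact Spread.deriv_spread_pos (fun x y => dist x y) (fun _ _ => dist_nonneg)
    (dist_pos.mpr hxy) t

/-- For a finite metric space `(X,d)` with at least two points and any `t > 0`,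
the derivative of the spread is strictly positive. -/
theorem spread_deriv_pos {X : Type*} [MetricSpace X] [Fintype X]
    (hcard : 2 ≤ Fintype.card X) (t : ℝ) (ht : 0 < t) :
    0 < deriv (fun t : ℝ => ∑ x : X, 1 / ∑ y : X, Real.exp (-t * dist x y)) t :=
  spread_deriv_pos_general hcard t
end

section
/- For a finite metric space (X,d), the spread dimension tends to 0 as t → ∞: t·σ_d'(t)/σ_d(t) → 0. -/
/-! As `t → ∞` every `e^{-t d(x,y)}` with `y ≠ x` decays, so each `∑ y, e^{-t d(x,y)}` tends
to `1` and the spread tends to `#X ≠ 0`. Differentiating termwise, `t σ'(t)` is a finite sum of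
terms `t d e^{-t d} / (∑ y, e^{-t d(x,y)})²`, each of which tends to `0 / 1`. -/

open Real Filter Topology Finset

theorem tendsto_mul_mul_exp_neg_mul_atTop_nhds_zero {c : ℝ} (hc : 0 ≤ c) :
    Tendsto (fun t : ℝ => t * c * exp (-t * c)) atTop (𝓝 0) := by
  rcases hc.eq_or_lt with rfl | hc
  · simp
  have h := (tendsto_pow_mul_exp_neg_atTop_nhds_zero 1).comp (tendsto_id.atTop_mul_const hc)
  simpa [Function.comp_def, neg_mul] using h

theorem tendsto_exp_neg_mul_atTop_nhds_zero {c : ℝ} (hc : 0 < c) :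
    Tendsto (fun t : ℝ => exp (-t * c)) atTop (𝓝 0) := by
  simpa [Function.comp_def, neg_mul] using
    tendsto_exp_neg_atTop_nhds_zero.comp (tendsto_id.atTop_mul_const hc)

section Spread

variable (X : Type*) [MetricSpace X] [Fintype X]

noncomputable def spread (t : ℝ) : ℝ := ∑ x : X, 1 / ∑ y : X, exp (-t * dist x y)

variable {X}

theorem tendsto_sum_exp_neg_mul_dist_atTop (x : X) :
    Tendsto (fun t : ℝ => ∑ y : X, exp (-t * dist x y)) atTop (𝓝 1) := by
  classical
  have h := tendsto_finsetSum (univ : Finset X) fun y _ =>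
    show Tendsto (fun t : ℝ => exp (-t * dist x y)) atTop (𝓝 (if x = y then 1 else 0)) by
      split_ifs with hxy
      · simp [hxy]
      · exact tendsto_exp_neg_mul_atTop_nhds_zero (dist_pos.2 hxy)
  simpa using h

theorem one_le_sum_exp_neg_mul_dist (x : X) (t : ℝ) : 1 ≤ ∑ y : X, exp (-t * dist x y) := by
  simpa using single_le_sum (f := fun y => exp (-t * dist x y)) (fun y _ => (exp_pos _).le)
    (mem_univ x)

theorem tendsto_spread_atTop : Tendsto (spread X) atTop (𝓝 (Fintype.card X)) := by
  unfold spread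
  simpa using tendsto_finsetSum (univ : Finset X) fun x _ =>
    (tendsto_sum_exp_neg_mul_dist_atTop x).inv₀ one_ne_zero

theorem hasDerivAt_spread (t : ℝ) :
    HasDerivAt (spread X)
      (∑ x : X,
        (∑ y : X, dist x y * exp (-t * dist x y)) / (∑ y : X, exp (-t * dist x y)) ^ 2) t := by
  unfold spread
  simp only [one_div]
  refine HasDerivAt.fun_sum fun x _ => ?_
  have hsum : HasDerivAt (fun t : ℝ => ∑ y : X, exp (-t * dist x y))
      (∑ y : X, exp (-t * dist x y) * (-1 * dist x y)) t :=
    HasDerivAt.fun_sum fun y _ => ((hasDerivAt_id t).neg.mul_const (dist x y)).exp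
  refine (hsum.inv (zero_lt_one.trans_le (one_le_sum_exp_neg_mul_dist x t)).ne').congr_deriv ?_
  rw [← sum_neg_distrib]
  congr 1
  exact sum_congr rfl fun y _ => by ring

theorem tendsto_mul_deriv_spread_atTop :
    Tendsto (fun t => t * deriv (spread X) t) atTop (𝓝 0) := by
  have h : Tendsto (fun t : ℝ => ∑ x : X,
      (∑ y : X, t * dist x y * exp (-t * dist x y)) / (∑ y : X, exp (-t * dist x y)) ^ 2)
      atTop (𝓝 (∑ x : X, (∑ y : X, (0 : ℝ)) / 1 ^ 2)) :=
    tendsto_finsetSum (univ : Finset X) fun x _ =>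
      (tendsto_finsetSum (univ : Finset X) fun y _ =>
        tendsto_mul_mul_exp_neg_mul_atTop_nhds_zero dist_nonneg).div
        ((tendsto_sum_exp_neg_mul_dist_atTop x).pow 2) (by norm_num)
  simp only [sum_const_zero, zero_div] at h
  refine h.congr fun t => ?_
  simp only [(hasDerivAt_spread t).deriv, mul_sum, mul_div_assoc', mul_assoc]

end Spread

/-- For a finite metric space `(X,d)`, the spread dimension tends to `0` as `t → ∞`:
`t·σ_d'(t)/σ_d(t) → 0`. -/
theorem spreadDimension_tendsto_zero {X : Type*} [MetricSpace X] [Fintype X] [Nonempty X] :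
    Filter.Tendsto
      (fun t : ℝ =>
        t * deriv (fun t : ℝ => ∑ x : X, 1 / ∑ y : X, Real.exp (-t * dist x y)) t /
          (∑ x : X, 1 / ∑ y : X, Real.exp (-t * dist x y)))
      Filter.atTop (nhds 0) := by
  have h := (tendsto_mul_deriv_spread_atTop (X := X)).div (tendsto_spread_atTop (X := X))
    (Nat.cast_ne_zero.2 Fintype.card_ne_zero)
  rwa [zero_div] at h
end
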